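/- For every real a ≥ √3/2, the number N_≤(a) of a-admissible sequences satisfies the functional equation N_≤(a) = 2(⌊√(4a²+1)⌋ − 1) + 2·∑_{k=1}^{K} N_≤(a − √(k(k+2))/2), where K = ⌊√(4a²+1)⌋ − 1 (equivalently the sum may be taken over all k ≥ 1, since N_≤(b) = 0 for b < √3/2). -/

import Mathlib

/-!
Split an `a`-admissible sequence after its first entry `j`: what remains is either empty or an
`(a - wt j)`-admissible sequence, and conversely. The possible first entries are the `j ≠ 0` with
`wt j ≤ a`, i.e. `|j| + 1 ≤ √(4a² + 1)`; since `wt (-j) = wt j`, each `k = 1, …, K` occurs twice.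
-/

/-- The weight of an entry `j : ℤ` encoding the nonzero half-integer `m = j/2`:
`√(|m|(|m|+1)) = √(|j|(|j|+2))/2`. -/
noncomputable def wt (j : ℤ) : ℝ := Real.sqrt (|(j : ℝ)| * (|(j : ℝ)| + 2)) / 2

/-- The set of `a`-admissible sequences: nonempty lists of nonzero half-integers
`mᵢ = jᵢ/2` with `∑ᵢ √(|mᵢ|(|mᵢ|+1)) ≤ a`. -/
def adm (a : ℝ) : Set (List ℤ) :=
  {l | l ≠ [] ∧ (∀ j ∈ l, j ≠ 0) ∧ (l.map wt).sum ≤ a}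

/-- `N_≤(a)`, the number of `a`-admissible sequences. -/
noncomputable def Nle (a : ℝ) : ℕ := Nat.card (adm a)

open Finset

lemma wt_nonneg (j : ℤ) : 0 ≤ wt j := by
  unfold wt; positivity

lemma wt_neg (j : ℤ) : wt (-j) = wt j := by
  simp only [wt, Int.cast_neg, abs_neg]

lemma wt_natCast (k : ℕ) : wt k = Real.sqrt ((k : ℝ) * ((k : ℝ) + 2)) / 2 := by
  simp only [wt, Int.cast_natCast, Nat.abs_cast]

lemma half_le_wt {j : ℤ} (hj : j ≠ 0) : 1 / 2 ≤ wt j := by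
  have h1 : (1 : ℝ) ≤ |(j : ℝ)| := by exact_mod_cast Int.one_le_abs hj
  unfold wt
  gcongr
  exact Real.one_le_sqrt.2 (by nlinarith)

lemma wt_le_iff {a : ℝ} (ha : 0 ≤ a) (j : ℤ) :
    wt j ≤ a ↔ j.natAbs + 1 ≤ ⌊Real.sqrt (4 * a ^ 2 + 1)⌋₊ := by
  have hx : ((j.natAbs + 1 : ℕ) : ℝ) = |(j : ℝ)| + 1 := by push_cast [Nat.cast_natAbs]; rfl
  rw [Nat.le_floor_iff (Real.sqrt_nonneg _), hx, wt, div_le_iff₀ two_pos, Real.sqrt_le_iff,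
    Real.le_sqrt (by positivity) (by positivity)]
  have : 0 ≤ |(j : ℝ)| := abs_nonneg _
  constructor
  · rintro ⟨-, h⟩; nlinarith
  · intro h; exact ⟨by positivity, by nlinarith⟩

lemma sum_map_wt_nonneg (l : List ℤ) : 0 ≤ (l.map wt).sum :=
  List.sum_nonneg (by simp [wt_nonneg])

lemma wt_le_sum_map_wt {l : List ℤ} {j : ℤ} (hj : j ∈ l) : wt j ≤ (l.map wt).sum :=
  List.single_le_sum (by simp [wt_nonneg]) _ (List.mem_map_of_mem hj)

lemma length_div_two_le_sum_map_wt {l : List ℤ} (hl : ∀ j ∈ l, j ≠ 0) :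
    (l.length : ℝ) / 2 ≤ (l.map wt).sum := by
  induction l with
  | nil => simp
  | cons j t ih =>
    have hj := half_le_wt (hl j List.mem_cons_self)
    have ht := ih fun i hi => hl i (List.mem_cons_of_mem j hi)
    simp only [List.map_cons, List.sum_cons, List.length_cons, Nat.cast_succ]
    linarith

lemma cons_mem_adm_iff {a : ℝ} {j : ℤ} {t : List ℤ} :
    j :: t ∈ adm a ↔ j ≠ 0 ∧ wt j ≤ a ∧ (t = [] ∨ t ∈ adm (a - wt j)) := by
  simp only [adm, Set.mem_ofPred_eq, List.mem_cons, forall_eq_or_imp, List.map_cons,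
    List.sum_cons]
  constructor
  · rintro ⟨-, ⟨hj, ht⟩, hsum⟩
    refine ⟨hj, by linarith [sum_map_wt_nonneg t], ?_⟩
    rcases eq_or_ne t [] with rfl | hne
    · exact .inl rfl
    · exact .inr ⟨hne, ht, by linarith⟩
  · rintro ⟨hj, hja, rfl | ⟨-, ht, hsum⟩⟩
    · simpa using ⟨hj, hja⟩
    · exact ⟨List.cons_ne_nil _ _, ⟨hj, ht⟩, by linarith⟩

def letters (K : ℕ) : Finset ℤ :=
  (Icc 1 K).image (fun k : ℕ => (k : ℤ)) ∪ (Icc 1 K).image (fun k : ℕ => -(k : ℤ))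

lemma mem_letters {K : ℕ} {j : ℤ} : j ∈ letters K ↔ j ≠ 0 ∧ j.natAbs ≤ K := by
  simp only [letters, mem_union, mem_image, mem_Icc]
  constructor
  · rintro (⟨k, hk, rfl⟩ | ⟨k, hk, rfl⟩) <;> omega
  · intro hj
    rcases lt_or_gt_of_ne hj.1 with hneg | hpos
    · exact .inr ⟨j.natAbs, by omega, by omega⟩
    · exact .inl ⟨j.natAbs, by omega, by omega⟩

lemma sum_letters {M : Type*} [AddCommMonoid M] (K : ℕ) {g : ℤ → M} (hg : ∀ j, g (-j) = g j) :
    ∑ j ∈ letters K, g j = 2 • ∑ k ∈ Icc 1 K, g k := by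
  have hdisj : Disjoint ((Icc 1 K).image (fun k : ℕ => (k : ℤ)))
      ((Icc 1 K).image (fun k : ℕ => -(k : ℤ))) := by
    simp only [disjoint_left, mem_image, mem_Icc]
    rintro _ ⟨k, hk, rfl⟩ ⟨m, hm, h⟩
    omega
  rw [letters, sum_union hdisj, sum_image (by simp), sum_image (by simp)]
  simp only [hg, two_nsmul]

lemma mem_letters_iff_wt_le {a : ℝ} (ha : 0 ≤ a) {j : ℤ} :
    j ∈ letters (⌊Real.sqrt (4 * a ^ 2 + 1)⌋₊ - 1) ↔ j ≠ 0 ∧ wt j ≤ a := by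
  rw [mem_letters, wt_le_iff ha]
  omega

lemma List.finite_setOf_forall_mem_length_le {α : Type*} (s : Finset α) (n : ℕ) :
    {l : List α | (∀ x ∈ l, x ∈ s) ∧ l.length ≤ n}.Finite := by
  refine ((List.finite_length_le s n).image (List.map Subtype.val)).subset ?_
  rintro l ⟨hl, hlen⟩
  exact ⟨l.pmap Subtype.mk hl, by simpa using hlen, by simp [List.map_pmap]⟩

lemma adm_finite (a : ℝ) : (adm a).Finite := by
  refine (List.finite_setOf_forall_mem_length_le
    (letters (⌊Real.sqrt (4 * a ^ 2 + 1)⌋₊ - 1)) ⌊2 * a⌋₊).subset ?_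
  rintro l ⟨-, hl, hsum⟩
  have ha : 0 ≤ a := (sum_map_wt_nonneg l).trans hsum
  refine ⟨fun j hj => (mem_letters_iff_wt_le ha).2 ⟨hl j hj, ?_⟩, Nat.le_floor ?_⟩
  · exact (wt_le_sum_map_wt hj).trans hsum
  · linarith [length_div_two_le_sum_map_wt hl]

section Decomposition

variable {a : ℝ} {S : Finset ℤ} (hS : ∀ j, j ∈ S ↔ j ≠ 0 ∧ wt j ≤ a)
include hS

/-- `none` stands for the one-entry sequence `[j]`. -/
def consAdm : (Σ j : S, Option (adm (a - wt j))) → adm a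
  | ⟨j, none⟩ => ⟨[j], cons_mem_adm_iff.2 ⟨((hS j).1 j.2).1, ((hS j).1 j.2).2, .inl rfl⟩⟩
  | ⟨j, some t⟩ => ⟨j :: t, cons_mem_adm_iff.2 ⟨((hS j).1 j.2).1, ((hS j).1 j.2).2, .inr t.2⟩⟩

lemma consAdm_bijective : Function.Bijective (consAdm hS) := by
  constructor
  · rintro ⟨⟨j, hj⟩, _ | ⟨t, ht⟩⟩ ⟨⟨j', hj'⟩, _ | ⟨t', ht'⟩⟩ h <;>
      simp only [consAdm, Subtype.mk.injEq, List.cons.injEq] at h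
    · obtain ⟨rfl, -⟩ := h; rfl
    · exact absurd h.2.symm ht'.1
    · exact absurd h.2 ht.1
    · obtain ⟨rfl, rfl⟩ := h; rfl
  · rintro ⟨_ | ⟨j, t⟩, hl⟩
    · exact absurd rfl hl.1
    obtain ⟨hj, hja, rfl | ht⟩ := cons_mem_adm_iff.1 hl
    · exact ⟨⟨⟨j, (hS j).2 ⟨hj, hja⟩⟩, none⟩, rfl⟩
    · exact ⟨⟨⟨j, (hS j).2 ⟨hj, hja⟩⟩, some ⟨t, ht⟩⟩, rfl⟩

lemma Nle_eq_sum : Nle a = ∑ j ∈ S, (Nle (a - wt j) + 1) := by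
  have (b : ℝ) : Finite (adm b) := (adm_finite b).to_subtype
  rw [Nle, ← Nat.card_eq_of_bijective _ (consAdm_bijective hS), Nat.card_sigma,
    ← sum_coe_sort S]
  simp only [Finite.card_option, Nle]

end Decomposition

/-- for every real `a ≥ √3/2`,
`N_≤(a) = 2(⌊√(4a²+1)⌋ - 1) + 2 ∑_{k=1}^{K} N_≤(a - √(k(k+2))/2)` with `K = ⌊√(4a²+1)⌋ - 1`. -/
theorem stmt_3 (a : ℝ) (ha : Real.sqrt 3 / 2 ≤ a) :
    Nle a = 2 * (⌊Real.sqrt (4 * a ^ 2 + 1)⌋₊ - 1) +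
      2 * ∑ k ∈ Finset.Icc 1 (⌊Real.sqrt (4 * a ^ 2 + 1)⌋₊ - 1),
        Nle (a - Real.sqrt ((k : ℝ) * ((k : ℝ) + 2)) / 2) := by
  have ha0 : 0 ≤ a := (by positivity : (0 : ℝ) ≤ Real.sqrt 3 / 2).trans ha
  rw [Nle_eq_sum fun j => mem_letters_iff_wt_le ha0, sum_letters _ fun j => by rw [wt_neg],
    sum_add_distrib, sum_const, Nat.card_Icc, Nat.add_sub_cancel, smul_eq_mul]
  simp only [wt_natCast]
  ring
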